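/- arXiv:2304.12440 — 3 statements merged into one kernel-verified Lean document; each statement's English description precedes it below -/
import Mathlib

section
/- If (X, >) is a well-founded partial order, then the multiset order induced by (X, >) on finite multisets over X is well-founded. -/
/-! A step `m₀ + {x} ≻¹ m₀ + nn` cuts `x` and grows the smaller elements `nn` in its place, so it is
the reverse of Mathlib's `Relation.CutExpand (· < ·)`, which is well-founded over a well-founded
order (`WellFounded.cutExpand`, the hydra argument). Transitive closure preserves well-foundedness. -/

namespace DershowitzManna

variable {X : Type*} [PartialOrder X]

/-- One step of the multiset order: `m + [x] ≻¹ m + n` whenever `x > y` for all `y ∈ n`. -/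
def MGt1 (m n : Multiset X) : Prop :=
  ∃ (m₀ nn : Multiset X) (x : X),
    m = m₀ + {x} ∧ n = m₀ + nn ∧ ∀ y ∈ nn, x > y

/-- The multiset order induced by `(X, >)`: transitive closure of `≻¹`. -/
def MGt (m n : Multiset X) : Prop := Relation.TransGen MGt1 m n

theorem MGt1.cutExpand {m n : Multiset X} (h : MGt1 m n) :
    Relation.CutExpand (· < ·) n m := by
  obtain ⟨m₀, nn, x, rfl, rfl, hx⟩ := h
  exact (Relation.cutExpand_add_left m₀).2 (Relation.cutExpand_singleton hx)

theorem MGt.transGen_cutExpand {m n : Multiset X} (h : MGt m n) :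
    Relation.TransGen (Relation.CutExpand (· < ·)) n m :=
  Relation.TransGen.mono (fun _ _ => MGt1.cutExpand) _ _ h.swap

/-- Dershowitz–Manna: if `(X, >)` is well-founded, the induced multiset order is well-founded. -/
theorem multiset_order_wellFounded
    (hwf : WellFounded ((· < ·) : X → X → Prop)) :
    WellFounded (fun n m : Multiset X => MGt m n) :=
  Subrelation.wf MGt.transGen_cutExpand hwf.cutExpand.transGen

end DershowitzManna
end

section
/- If m and n are finite multisets over a partially ordered set (X, >) with m pointwise greater than n (i.e., m = [x₁,…,xₖ] and n = [y₁,…,yₖ] with xᵢ > yᵢ for all i), then for every natural number k, m ⪰ k ⊗ n in the multiset order, where k ⊗ n denotes the k-fold sum n + ⋯ + n. -/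
namespace PointwiseMultiset

variable {X : Type*} [PartialOrder X]

/-- One step of the Dershowitz–Manna multiset order. -/
def MGt1 (m n : Multiset X) : Prop :=
  ∃ (m₀ nn : Multiset X) (x : X),
    m = m₀ + {x} ∧ n = m₀ + nn ∧ ∀ y ∈ nn, x > y

/-- The Dershowitz–Manna multiset order `≻`. -/
def MGt (m n : Multiset X) : Prop := Relation.TransGen MGt1 m n

/-- Reflexive closure `⪰`. -/
def MGe (m n : Multiset X) : Prop := m = n ∨ MGt m n

/-- The pointwise multiset order `m :≻: n`. -/
def PWGt (m n : Multiset X) : Prop :=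
  ∃ l₁ l₂ : List X, m = ↑l₁ ∧ n = ↑l₂ ∧ List.Forall₂ (· > ·) l₁ l₂

/-- `k ⊗ m`: the `k`-fold sum of `m`. -/
def ktimes : ℕ → Multiset X → Multiset X
  | 0, _ => 0
  | k + 1, m => m + ktimes k m

/-! Each `xᵢ` dominates the `k` copies of `yᵢ` in a single Dershowitz–Manna step, and `⪰` is
compatible with multiset sums; since `k ⊗ n = k • n`, summing these steps over `i` gives
`m ⪰ k ⊗ n`. -/

lemma ktimes_eq_nsmul {α : Type*} (k : ℕ) (m : Multiset α) : ktimes k m = k • m := by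
  induction k with
  | zero => exact (zero_nsmul m).symm
  | succ k ih => rw [ktimes, ih, succ_nsmul']

lemma MGt1.add_right {m n : Multiset X} (h : MGt1 m n) (p : Multiset X) :
    MGt1 (m + p) (n + p) := by
  obtain ⟨m₀, nn, x, rfl, rfl, hx⟩ := h
  exact ⟨m₀ + p, nn, x, add_right_comm _ _ _, add_right_comm _ _ _, hx⟩

lemma MGt.add_right {m n : Multiset X} (h : MGt m n) (p : Multiset X) :
    MGt (m + p) (n + p) :=
  Relation.TransGen.lift (· + p) (fun _ _ h₁ => h₁.add_right p) _ _ h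

lemma MGt.add_left {m n : Multiset X} (h : MGt m n) (p : Multiset X) :
    MGt (p + m) (p + n) := by
  rw [add_comm p m, add_comm p n]
  exact h.add_right p

lemma MGe.add {m n m' n' : Multiset X} (h : MGe m n) (h' : MGe m' n') :
    MGe (m + m') (n + n') := by
  rcases h with rfl | h <;> rcases h' with rfl | h'
  · exact Or.inl rfl
  · exact Or.inr (h'.add_left m)
  · exact Or.inr (h.add_right m')
  · exact Or.inr ((h.add_right m').trans (h'.add_left n))

lemma mgt_singleton_of_forall_lt {x : X} {nn : Multiset X} (h : ∀ y ∈ nn, y < x) :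
    MGt {x} nn :=
  .single ⟨0, nn, x, (zero_add _).symm, (zero_add _).symm, h⟩

lemma mgt_singleton_nsmul_singleton {x y : X} (hxy : y < x) (k : ℕ) :
    MGt {x} (k • {y}) :=
  mgt_singleton_of_forall_lt fun z hz => by
    rw [Multiset.nsmul_singleton] at hz
    rwa [Multiset.eq_of_mem_replicate hz]

lemma mge_nsmul_of_forall₂ {l₁ l₂ : List X} (h : List.Forall₂ (· > ·) l₁ l₂) (k : ℕ) :
    MGe (l₁ : Multiset X) (k • (l₂ : Multiset X)) := by
  induction h with
  | nil => exact Or.inl (nsmul_zero k).symm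
  | @cons x y xs ys hxy _ ih =>
    rw [← Multiset.cons_coe, ← Multiset.cons_coe, ← Multiset.singleton_add,
      ← Multiset.singleton_add, nsmul_add]
    exact MGe.add (Or.inr (mgt_singleton_nsmul_singleton hxy k)) ih

/-- If `m :≻: n` then `m ⪰ k ⊗ n` for every `k`. -/
theorem pwGt_implies_mge_ktimes (m n : Multiset X) (h : PWGt m n) :
    ∀ k : ℕ, MGe m (ktimes k n) := by
  obtain ⟨l₁, l₂, rfl, rfl, h⟩ := h
  intro k
  rw [ktimes_eq_nsmul]
  exact mge_nsmul_of_forall₂ h k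

end PointwiseMultiset
end

section
/- Klop–Nederpelt's lemma: if an abstract rewriting system is increasing (there is f : A → ℕ with a → b implying f(a) < f(b)), weakly Church–Rosser, and weakly normalizing, then it is strongly normalizing and Church–Rosser. -/
namespace ARS

/-- Klop–Nederpelt's lemma: an increasing, weakly Church–Rosser, weakly normalizing
abstract rewriting system is strongly normalizing and Church–Rosser. -/
theorem klop_nederpelt {A : Type*} (r : A → A → Prop)
    (hinc : ∃ f : A → ℕ, ∀ a b, r a b → f a < f b)
    (hwcr : ∀ a b c, r a b → r a c →
      ∃ d, Relation.ReflTransGen r b d ∧ Relation.ReflTransGen r c d)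
    (hwn : ∀ a, ∃ b, Relation.ReflTransGen r a b ∧ ∀ c, ¬ r b c) :
    WellFounded (fun b a => r a b) ∧
      (∀ a b c, Relation.ReflTransGen r a b → Relation.ReflTransGen r a c →
        ∃ d, Relation.ReflTransGen r b d ∧ Relation.ReflTransGen r c d) := by
  obtain ⟨f, hf⟩ := hinc
  have hmono : ∀ {a b : A}, Relation.ReflTransGen r a b → f a ≤ f b := by
    intro a b h
    induction h with
    | refl => exact le_refl _
    | tail _ h2 ih => exact le_of_lt (lt_of_le_of_lt ih (hf _ _ h2))
  have key : ∀ k : ℕ, ∀ a n : A, Relation.ReflTransGen r a n → (∀ c, ¬ r n c) →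
      f n - f a = k →
      Acc (fun b a => r a b) a ∧
      (∀ m, Relation.ReflTransGen r a m → (∀ c, ¬ r m c) → m = n) := by
    intro k
    induction k using Nat.strong_induction_on with
    | _ k ih =>
      intro a n han hn hk
      rcases Relation.ReflTransGen.cases_head han with heq | ⟨c, hac, hcn⟩
      · subst heq
        refine ⟨Acc.intro a fun b hb => absurd hb (hn b), ?_⟩
        intro m ham hm
        rcases Relation.ReflTransGen.cases_head ham with heq | ⟨c, hac, _⟩
        · exact heq.symm
        · exact absurd hac (hn c)
      · have hfc : f a < f c := hf _ _ hac
        have hcle : f c ≤ f n := hmono hcn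
        have hlt : f n - f c < k := by omega
        obtain ⟨_, uniqc⟩ := ih _ hlt c n hcn hn rfl
        -- every one-step successor b of a reduces to n
        have hstep : ∀ b, r a b → Relation.ReflTransGen r b n := by
          intro b hab
          obtain ⟨d, hbd, hcd⟩ := hwcr a b c hab hac
          obtain ⟨m, hdm, hm⟩ := hwn d
          have : m = n := uniqc m (hcd.trans hdm) hm
          exact hbd.trans (this ▸ hdm)
        constructor
        · refine Acc.intro a fun b hab => ?_
          have hbn := hstep b hab
          have hfb : f a < f b := hf _ _ hab
          have : f n - f b < k := by have := hmono hbn; omega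
          exact (ih _ this b n hbn hn rfl).1
        · intro m ham hm
          rcases Relation.ReflTransGen.cases_head ham with heq | ⟨b, hab, hbm⟩
          · subst heq; exact absurd hac (hm c)
          · have hbn := hstep b hab
            have hfb : f a < f b := hf _ _ hab
            have hlt' : f n - f b < k := by have := hmono hbn; omega
            exact (ih _ hlt' b n hbn hn rfl).2 m hbm hm
  have nf : ∀ a, ∃ n, Relation.ReflTransGen r a n ∧ (∀ c, ¬ r n c) ∧
      Acc (fun b a => r a b) a ∧
      (∀ m, Relation.ReflTransGen r a m → (∀ c, ¬ r m c) → m = n) := by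
    intro a
    obtain ⟨n, han, hn⟩ := hwn a
    obtain ⟨h1, h2⟩ := key _ a n han hn rfl
    exact ⟨n, han, hn, h1, h2⟩
  constructor
  · refine ⟨fun a => ?_⟩
    obtain ⟨n, han, hn, h1, h2⟩ := nf a
    exact h1
  · intro a b c hab hac
    obtain ⟨n, han, hn, _, uniq⟩ := nf a
    obtain ⟨m, hbm, hm, _, _⟩ := nf b
    obtain ⟨p, hcp, hp, _, _⟩ := nf c
    have hmn : m = n := uniq m (hab.trans hbm) hm
    have hpn : p = n := uniq p (hac.trans hcp) hp
    exact ⟨n, hmn ▸ hbm, hpn ▸ hcp⟩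

end ARS
end
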